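/- arXiv:2008.00124 — 2 statements merged into one kernel-verified Lean document; each statement's English description precedes it below -/
import Mathlib

section
/- Let $\vec N_t = (N_{1,t},\dots,N_{d,t})$ be a $d$-dimensional point process satisfying $\vec N(nt)/n \to \vec{\bar\lambda} t$ almost surely as $n\to\infty$, and for each $i$ let $(X_{i,k})_k$ be independent ergodic finite-state Markov chains with stationary distributions $\pi_i^*$, and $a_i$ bounded functions with $a_i^* = \sum_j \pi^*_{i,j} a_i(j)$. Define $S_{i,t} = S_{i,0} + \sum_{k=1}^{N_{i,t}} a_i(X_{i,k})$. Then componentwise $\vec S_{nt}/n \to \tilde a^* \vec{\bar\lambda} t$ almost surely as $n\to\infty$, where $\tilde a^* = \mathrm{diag}(a_1^*,\dots,a_d^*)$. -/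
open MeasureTheory ProbabilityTheory Filter Finset Topology

noncomputable section

/-- Convergence in law (weak convergence of distributions) of a sequence of
`E`-valued random elements to a limiting random element. -/
def TendstoInLaw {Ω Ω' E : Type*} [MeasurableSpace Ω] [MeasurableSpace Ω'] [TopologicalSpace E]
    (μ : Measure Ω) (f : ℕ → Ω → E) (ν : Measure Ω') (g : Ω' → E) : Prop :=
  ∀ h : BoundedContinuousFunction E ℝ,
    Tendsto (fun n => ∫ ω, h (f n ω) ∂μ) atTop (𝓝 (∫ ω', h (g ω') ∂ν))

/-- A standard one-dimensional Brownian motion (for times `t ≥ 0`). -/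
def IsStandardBM {Ω : Type*} [MeasurableSpace Ω] (ν : Measure Ω) (W : ℝ → Ω → ℝ) : Prop :=
  (∀ ω, W 0 ω = 0) ∧ (∀ ω, Continuous fun t => W t ω) ∧
  (∀ s t : ℝ, 0 ≤ s → s < t →
      Measure.map (fun ω => W t ω - W s ω) ν = gaussianReal 0 (Real.toNNReal (t - s))) ∧
  (∀ (m : ℕ) (u : ℕ → ℝ), Monotone u → (∀ k, 0 ≤ u k) →
      iIndepFun
        (fun k : Fin m => fun ω => W (u (k.1 + 1)) ω - W (u k.1) ω) ν)

/-- A standard `d`-dimensional Brownian motion: independent standard BM components. -/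
def IsStandardBMd {Ω : Type*} [MeasurableSpace Ω] (d : ℕ) (ν : Measure Ω)
    (W : ℝ → Ω → Fin d → ℝ) : Prop :=
  (∀ i, IsStandardBM ν (fun t ω => W t ω i)) ∧
  iIndepFun (fun i : Fin d => fun ω => fun t : ℝ => W t ω i) ν

/-- A homogeneous Poisson process with rate `lam` (for times `t ≥ 0`). -/
def IsPoissonProcess {Ω : Type*} [MeasurableSpace Ω] (μ : Measure Ω) (lam : ℝ)
    (N : ℝ → Ω → ℕ) : Prop :=
  (∀ ω, N 0 ω = 0) ∧ (∀ ω, Monotone fun t => N t ω) ∧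
  (∀ s t : ℝ, 0 ≤ s → s < t →
      Measure.map (fun ω => N t ω - N s ω) μ
        = (poissonPMF (Real.toNNReal (lam * (t - s)))).toMeasure) ∧
  (∀ (m : ℕ) (u : ℕ → ℝ), Monotone u → (∀ k, 0 ≤ u k) →
      iIndepFun
        (fun k : Fin m => fun ω => N (u (k.1 + 1)) ω - N (u k.1) ω) μ)

/-!
Pathwise, `S_i(nt) = S_i(0) + A(N_i(nt))` with `A m = ∑_{k<m} a_i(X_{i,k})`, and
`A(N(nt)) / n = (A(N(nt)) / N(nt)) · (N(nt) / n)`. When `λ̄_i t > 0` the counts `N(nt)` tend to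
infinity, so the first factor tends to `a_i*` by the ergodic averages; when `λ̄_i t = 0` it stays
bounded while the second factor tends to `0`. The initial value contributes `S_i(0) / n → 0`.
-/

theorem tendsto_atTop_of_tendsto_div_natCast {M : ℕ → ℕ} {c : ℝ} (hc : 0 < c)
    (hM : Tendsto (fun n : ℕ => (M n : ℝ) / n) atTop (𝓝 c)) : Tendsto M atTop atTop := by
  rw [← tendsto_natCast_atTop_iff (R := ℝ)]
  refine (hM.pos_mul_atTop hc tendsto_natCast_atTop_atTop).congr' ?_
  filter_upwards [eventually_ne_atTop 0] with n hn
  field_simp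

theorem tendsto_comp_div_of_tendsto_div {A : ℕ → ℝ} {L : ℝ} (hA0 : A 0 = 0)
    (hA : Tendsto (fun m : ℕ => A m / m) atTop (𝓝 L)) {M : ℕ → ℕ} {c : ℝ}
    (hM : Tendsto (fun n : ℕ => (M n : ℝ) / n) atTop (𝓝 c)) :
    Tendsto (fun n : ℕ => A (M n) / n) atTop (𝓝 (L * c)) := by
  have hfactor : ∀ n : ℕ, A (M n) / n = A (M n) / M n * (M n / n) := by
    intro n
    rcases Nat.eq_zero_or_pos (M n) with h | h
    · simp [h, hA0]
    · field_simp
  simp only [hfactor]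
  have hc : 0 ≤ c := ge_of_tendsto' hM fun n => by positivity
  rcases hc.eq_or_lt with rfl | hc
  · -- `A m / m` is bounded on all of `ℕ`, even though `M n` need not tend to infinity.
    obtain ⟨B, hB⟩ := (Metric.isBounded_range_of_tendsto _ hA).exists_norm_le
    rw [mul_zero]
    exact isBoundedUnder_le_mul_tendsto_zero
      (isBoundedUnder_of ⟨B, fun n => hB _ ⟨M n, rfl⟩⟩) hM
  · exact (hA.comp (tendsto_atTop_of_tendsto_div_natCast hc hM)).mul hM

theorem mgcpp_lln_general
    {Ω : Type*} [MeasurableSpace Ω] (μ : Measure Ω)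
    {d : ℕ} {α : Fin d → Type*}
    (X : ∀ i : Fin d, ℕ → Ω → α i) (a : ∀ i : Fin d, α i → ℝ) (astar : Fin d → ℝ)
    (hSLLN : ∀ i, ∀ᵐ ω ∂μ, Tendsto
      (fun n : ℕ => (∑ k ∈ Finset.range n, a i (X i k ω)) / (n : ℝ)) atTop (𝓝 (astar i)))
    (N : Fin d → ℝ → Ω → ℕ) (lam : Fin d → ℝ)
    (hLLN : ∀ i, ∀ t : ℝ, 0 ≤ t → ∀ᵐ ω ∂μ,
      Tendsto (fun n : ℕ => (N i ((n : ℝ) * t) ω : ℝ) / (n : ℝ)) atTop (𝓝 (lam i * t)))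
    (S0 : Fin d → ℝ) (S : Fin d → ℝ → Ω → ℝ)
    (hS : ∀ i t ω, S i t ω = S0 i + ∑ k ∈ Finset.range (N i t ω), a i (X i k ω)) :
    ∀ t : ℝ, 0 ≤ t → ∀ i : Fin d, ∀ᵐ ω ∂μ,
      Tendsto (fun n : ℕ => S i ((n : ℝ) * t) ω / (n : ℝ)) atTop
        (𝓝 (astar i * (lam i * t))) := by
  intro t ht i
  filter_upwards [hSLLN i, hLLN i t ht] with ω hX hN
  have hS0 : Tendsto (fun n : ℕ => S0 i / n) atTop (𝓝 0) :=
    tendsto_const_nhds.div_atTop tendsto_natCast_atTop_atTop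
  have hsum := hS0.add (tendsto_comp_div_of_tendsto_div (by simp) hX hN)
  rw [zero_add] at hsum
  simpa only [hS, add_div] using hsum

/-- LLN for the multivariate general compound point process (MGCPP):
componentwise `S_i(nt)/n → a_i* λ̄_i t` almost surely. -/
theorem mgcpp_lln
    {Ω : Type*} [MeasurableSpace Ω] (μ : Measure Ω) [IsProbabilityMeasure μ]
    {d : ℕ} {α : Fin d → Type*} [∀ i, Fintype (α i)] [∀ i, MeasurableSpace (α i)]
    (X : ∀ i : Fin d, ℕ → Ω → α i) (a : ∀ i : Fin d, α i → ℝ) (astar : Fin d → ℝ)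
    (hXindep : iIndepFun
      (fun i : Fin d => fun ω => fun k : ℕ => X i k ω) μ)
    (hSLLN : ∀ i, ∀ᵐ ω ∂μ, Tendsto
      (fun n : ℕ => (∑ k ∈ Finset.range n, a i (X i k ω)) / (n : ℝ)) atTop (𝓝 (astar i)))
    (N : Fin d → ℝ → Ω → ℕ) (lam : Fin d → ℝ)
    (hN0 : ∀ i ω, N i 0 ω = 0)
    (hNmono : ∀ i ω, Monotone fun t => N i t ω)
    (hLLN : ∀ i, ∀ t : ℝ, 0 ≤ t → ∀ᵐ ω ∂μ,
      Tendsto (fun n : ℕ => (N i ((n : ℝ) * t) ω : ℝ) / (n : ℝ)) atTop (𝓝 (lam i * t)))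
    (S0 : Fin d → ℝ) (S : Fin d → ℝ → Ω → ℝ)
    (hS : ∀ i t ω, S i t ω = S0 i + ∑ k ∈ Finset.range (N i t ω), a i (X i k ω)) :
    ∀ t : ℝ, 0 ≤ t → ∀ i : Fin d, ∀ᵐ ω ∂μ,
      Tendsto (fun n : ℕ => S i ((n : ℝ) * t) ω / (n : ℝ)) atTop
        (𝓝 (astar i * (lam i * t))) :=
  mgcpp_lln_general μ X a astar hSLLN N lam hLLN S0 S hS
end
end

section
/- Let $P$ be the transition matrix of an ergodic Markov chain on a finite state space, $\Pi^*$ the matrix whose rows are all equal to the stationary distribution $\pi^*$, and $b$ a vector with $\sum_j \pi^*_j b(j) = 0$. Then the matrix $P + \Pi^* - I$ is invertible, so $g := (P + \Pi^* - I)^{-1} b$ is well-defined, and $g$ satisfies the Poisson equation $(I - P) g = -b + \Pi^* g$ restricted appropriately; in particular $(P - I) g = b - \Pi^* b = b$ when additionally $\Pi^* g = 0$ is imposed via the centering of $b$. -/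
/-!
If `P ^ n → Q`, then `Q * P = Q` and `Q * Q = Q`, hence `Q * (P + Q - 1) = Q`. Applying `Q` to
`(P + Q - 1) g = b` therefore gives `Q g = Q b`, which vanishes for centred `b`, and then
`(P - 1) g = b`. The same computation shows that a null vector `v` of `P + Q - 1` satisfies
`Q v = 0` and `P v = v`; but a `P`-fixed vector is fixed by the limit `Q` of the powers of `P`,
so `v = Q v = 0`.
-/

open Matrix Filter Topology

section LimitOfPowers

variable {M : Type*} [Monoid M] [TopologicalSpace M] [ContinuousMul M] [T2Space M] {a q : M}

theorem mul_eq_left_of_tendsto_pow (h : Tendsto (a ^ ·) atTop (𝓝 q)) : q * a = q := by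
  have hshift : Tendsto (fun n => a ^ n * a) atTop (𝓝 q) := by
    simpa only [← pow_succ] using (tendsto_add_atTop_iff_nat 1).2 h
  exact tendsto_nhds_unique (h.mul_const a) hshift

theorem isIdempotentElem_of_tendsto_pow (h : Tendsto (a ^ ·) atTop (𝓝 q)) :
    IsIdempotentElem q := by
  have hdouble : Tendsto (fun n => a ^ n * a ^ n) atTop (𝓝 q) := by
    simpa only [← pow_add, Function.comp_def, id] using h.comp (tendsto_id.atTop_add_atTop tendsto_id)
  exact tendsto_nhds_unique (h.mul h) hdouble

end LimitOfPowers

theorem mul_add_sub_one_eq_self {R : Type*} [Ring R] {p q : R} (hqp : q * p = q)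
    (hq : IsIdempotentElem q) : q * (p + q - 1) = q := by
  rw [mul_sub, mul_add, hqp, hq.eq, mul_one, add_sub_cancel_right]

namespace Matrix

variable {ι R : Type*} [Fintype ι] [DecidableEq ι]

theorem mulVec_eq_self_of_tendsto_pow [Semiring R] [TopologicalSpace R]
    [IsTopologicalSemiring R] [T2Space R] {P Q : Matrix ι ι R}
    (h : Tendsto (P ^ ·) atTop (𝓝 Q)) {v : ι → R} (hv : P *ᵥ v = v) : Q *ᵥ v = v := by
  have hpow : ∀ n : ℕ, (P ^ n) *ᵥ v = v := by
    intro n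
    induction n with
    | zero => simp
    | succ n ih => rw [pow_succ, ← mulVec_mulVec, hv, ih]
  have hlim : Tendsto (fun n : ℕ => (P ^ n) *ᵥ v) atTop (𝓝 (Q *ᵥ v)) :=
    ((continuous_id.matrix_mulVec continuous_const).tendsto Q).comp h
  exact tendsto_nhds_unique hlim (by simp only [hpow, tendsto_const_nhds])

theorem isUnit_add_sub_one_of_tendsto_pow [Field R] [TopologicalSpace R]
    [IsTopologicalRing R] [T2Space R] {P Q : Matrix ι ι R}
    (h : Tendsto (P ^ ·) atTop (𝓝 Q)) : IsUnit (P + Q - 1) := by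
  rw [isUnit_iff_isUnit_det, isUnit_iff_ne_zero, Ne, ← exists_mulVec_eq_zero_iff]
  rintro ⟨v, hv0, hv⟩
  have hQv : Q *ᵥ v = 0 := by
    rw [← mul_add_sub_one_eq_self (mul_eq_left_of_tendsto_pow h)
      (isIdempotentElem_of_tendsto_pow h), ← mulVec_mulVec, hv, mulVec_zero]
  have hPv : P *ᵥ v = v := by
    rwa [sub_mulVec, add_mulVec, hQv, add_zero, one_mulVec, sub_eq_zero] at hv
  exact hv0 (by rw [← mulVec_eq_self_of_tendsto_pow h hPv, hQv])

theorem poisson_equation_of_mulVec_eq [CommRing R] {P Q : Matrix ι ι R} (hQP : Q * P = Q)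
    (hQ : IsIdempotentElem Q) {b g : ι → R} (hb : Q *ᵥ b = 0) (hg : (P + Q - 1) *ᵥ g = b) :
    Q *ᵥ g = 0 ∧ (P - 1) *ᵥ g = b := by
  have hQg : Q *ᵥ g = 0 := by
    rw [← mul_add_sub_one_eq_self hQP hQ, ← mulVec_mulVec, hg, hb]
  refine ⟨hQg, ?_⟩
  rwa [add_sub_right_comm, add_mulVec, hQg, add_zero] at hg

theorem mulVec_inv_mulVec [CommRing R] {A : Matrix ι ι R} (hA : IsUnit A) (b : ι → R) :
    A *ᵥ (A⁻¹ *ᵥ b) = b := by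
  rw [mulVec_mulVec, mul_nonsing_inv A ((isUnit_iff_isUnit_det A).1 hA), one_mulVec]

end Matrix

theorem fundamental_matrix_poisson_equation_general
    {ι : Type*} [Fintype ι] [DecidableEq ι]
    (P : Matrix ι ι ℝ) (π : ι → ℝ)
    (Pst : Matrix ι ι ℝ) (hPst : ∀ i j, Pst i j = π j)
    (hergodic : Tendsto (fun n : ℕ => P ^ n) atTop (𝓝 Pst))
    (b : ι → ℝ) (hb : ∑ j, π j * b j = 0) :
    IsUnit (P + Pst - 1) ∧
    Pst.mulVec ((P + Pst - 1)⁻¹.mulVec b) = 0 ∧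
    (P - 1).mulVec ((P + Pst - 1)⁻¹.mulVec b) = b := by
  have hunit : IsUnit (P + Pst - 1) := isUnit_add_sub_one_of_tendsto_pow hergodic
  have hcentred : Pst *ᵥ b = 0 := funext fun i => by simp [mulVec, dotProduct, hPst, hb]
  exact ⟨hunit, poisson_equation_of_mulVec_eq (mul_eq_left_of_tendsto_pow hergodic)
    (isIdempotentElem_of_tendsto_pow hergodic) hcentred (mulVec_inv_mulVec hunit b)⟩

/-- Fundamental-matrix construction for an ergodic finite-state Markov chain:
if `P` is the transition matrix, `Π*` the matrix with all rows equal to the stationary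
distribution `π*` (ergodicity expressed by `P^n → Π*`), and `b` is centered
(`∑ j, π* j * b j = 0`), then `P + Π* - I` is invertible, and
`g = (P + Π* - I)⁻¹ b` satisfies `Π* g = 0` and the Poisson equation `(P - I) g = b`. -/
theorem fundamental_matrix_poisson_equation
    {ι : Type*} [Fintype ι] [DecidableEq ι] [Nonempty ι]
    (P : Matrix ι ι ℝ) (π : ι → ℝ)
    (hPnonneg : ∀ i j, 0 ≤ P i j) (hProw : ∀ i, ∑ j, P i j = 1)
    (hπnonneg : ∀ j, 0 ≤ π j) (hπsum : ∑ j, π j = 1)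
    (hπstat : Matrix.vecMul π P = π)
    (Pst : Matrix ι ι ℝ) (hPst : ∀ i j, Pst i j = π j)
    (hergodic : Tendsto (fun n : ℕ => P ^ n) atTop (𝓝 Pst))
    (b : ι → ℝ) (hb : ∑ j, π j * b j = 0) :
    IsUnit (P + Pst - 1) ∧
    Pst.mulVec ((P + Pst - 1)⁻¹.mulVec b) = 0 ∧
    (P - 1).mulVec ((P + Pst - 1)⁻¹.mulVec b) = b :=
  fundamental_matrix_poisson_equation_general P π Pst hPst hergodic b hb
end
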